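/- (Orthogonality of eigenfunctions on (s0,b).) Let s0 ≤ b with b ∈ I, let r : I → ℝ be continuous on [s0,b], and let a1, a2, b1, b2 be real numbers with |a1| + |a2| ≠ 0 and |b1| + |b2| ≠ 0. Suppose λ1, λ2 ∈ ℂ with λ1 ≠ λ2, and φ1, φ2 : I → ℂ belong to L²_β(s0,b), are continuous and differentiable at s0, have D_β φj differentiable at s0 and D_β φj, D_{β^{-1}}D_β φj bounded on {β^k(b) : k ∈ ℕ₀} ∪ {s0}, satisfy ℓ_β φj(t) = λj·φj(t) for all t in {β^k(b) : k ∈ ℕ₀} ∪ {s0}, the boundary conditions a1·φj(s0) + a2·(D_{β^{-1}}φj)(s0) = 0 and b1·φj(b) + b2·(D_{β^{-1}}φj)(b) = 0, and ∫_{s0}^{b} |φj|² d_β > 0, for j = 1, 2. Then ⟨φ1, φ2⟩ = ∫_{s0}^{b} φ1(t)·conj(φ2(t)) d_β t = 0. -/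

import Mathlib

/- The β-Lagrange identity `(t - β t)(z ℓy - y ℓz)(t) = [y,z](t) - [y,z](β t)` telescopes along
the orbit `β^k b ↓ s0`, and `[y,z](β^k b) → [y,z](s0)` because `D_{β⁻¹}` at `β^(k+1) b` is `D_β`
at `β^k b`. For eigenfunctions this is a β-Green formula
`(μ - ν) ∫_{s0}^b y z d_β = [y,z](b) - [y,z](s0)`, and separated boundary conditions make both
Wronskians vanish. With `z = conj φ₂`, taking `y = φ₂` shows that `λ₂` is real, as
`∫ |φ₂|² d_β > 0`; taking `y = φ₁` then gives `(λ₁ - λ₂) ⟨φ₁, φ₂⟩ = 0`. -/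

open Function Set ComplexConjugate

/-- The β-derivative `D_β f` of `f : ℝ → ℂ`:
`(f (β t) - f t) / (β t - t)` for `t ≠ s0`, and `f' s0` at `t = s0`. -/
noncomputable def Dq (β : ℝ → ℝ) (s0 : ℝ) (f : ℝ → ℂ) (t : ℝ) : ℂ :=
  if t = s0 then deriv f s0 else (f (β t) - f t) / ((β t : ℂ) - (t : ℂ))

/-- The β-integral `∫_{s0}^{x} f d_β = ∑_{k} (β^k x - β^{k+1} x) f (β^k x)` (complex-valued). -/
noncomputable def betaInt (β : ℝ → ℝ) (x : ℝ) (f : ℝ → ℂ) : ℂ :=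
  ∑' k : ℕ, ((β^[k] x - β^[k + 1] x : ℝ) : ℂ) * f (β^[k] x)

/-- The β-integral `∫_{s0}^{x} f d_β` for a real-valued integrand. -/
noncomputable def betaIntR (β : ℝ → ℝ) (x : ℝ) (f : ℝ → ℝ) : ℝ :=
  ∑' k : ℕ, (β^[k] x - β^[k + 1] x) * f (β^[k] x)

/-- `∫_a^b f d_β := ∫_{s0}^b f d_β - ∫_{s0}^a f d_β`. -/
noncomputable def betaIntAB (β : ℝ → ℝ) (a b : ℝ) (f : ℝ → ℂ) : ℂ :=
  betaInt β b f - betaInt β a f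

/-- `∫_a^b f d_β` for a real-valued integrand. -/
noncomputable def betaIntRAB (β : ℝ → ℝ) (a b : ℝ) (f : ℝ → ℝ) : ℝ :=
  betaIntR β b f - betaIntR β a f

/-- `D_β β⁻¹`, viewed as a complex-valued function. -/
noncomputable def DbinvC (β βinv : ℝ → ℝ) (s0 : ℝ) : ℝ → ℂ :=
  Dq β s0 fun u => (βinv u : ℂ)

/-- The β-Sturm–Liouville operator
`ℓ_β y (t) = -(D_β β⁻¹)(t) · (D_{β⁻¹} (D_β y))(t) + r t · y t`. -/
noncomputable def ellBeta (β βinv : ℝ → ℝ) (s0 : ℝ) (r : ℝ → ℝ) (y : ℝ → ℂ) (t : ℝ) : ℂ :=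
  -(DbinvC β βinv s0 t) * Dq βinv s0 (Dq β s0 y) t + (r t : ℂ) * y t

/-- The β-Wronskian `[y,z](t) = y t · (D_{β⁻¹} z) t - z t · (D_{β⁻¹} y) t`. -/
noncomputable def wronk (βinv : ℝ → ℝ) (s0 : ℝ) (y z : ℝ → ℂ) (t : ℝ) : ℂ :=
  y t * Dq βinv s0 z t - z t * Dq βinv s0 y t

/-- The β-exponential `e_{p,β}(t) = 1 / ∏_k (1 - p(β^k t)(β^k t - β^{k+1} t))`. -/
noncomputable def ebeta (β : ℝ → ℝ) (p : ℝ → ℂ) (t : ℝ) : ℂ :=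
  1 / ∏' k : ℕ, (1 - p (β^[k] t) * ((β^[k] t - β^[k + 1] t : ℝ) : ℂ))

/-- The β-exponential `E_{p,β}(t) = ∏_k (1 + p(β^k t)(β^k t - β^{k+1} t))`. -/
noncomputable def Ebeta (β : ℝ → ℝ) (p : ℝ → ℂ) (t : ℝ) : ℂ :=
  ∏' k : ℕ, (1 + p (β^[k] t) * ((β^[k] t - β^[k + 1] t : ℝ) : ℂ))

/-- `sin_{p,β}(t) = (e_{ip,β}(t) - e_{-ip,β}(t)) / (2i)`. -/
noncomputable def sinBeta (β : ℝ → ℝ) (p : ℝ → ℂ) (t : ℝ) : ℂ :=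
  (ebeta β (fun s => Complex.I * p s) t - ebeta β (fun s => -(Complex.I * p s)) t) /
    (2 * Complex.I)

/-- `cos_{p,β}(t) = (e_{ip,β}(t) + e_{-ip,β}(t)) / 2`. -/
noncomputable def cosBeta (β : ℝ → ℝ) (p : ℝ → ℂ) (t : ℝ) : ℂ :=
  (ebeta β (fun s => Complex.I * p s) t + ebeta β (fun s => -(Complex.I * p s)) t) / 2

open Filter Topology

lemma Dq_conj (γ : ℝ → ℝ) (s0 : ℝ) (f : ℝ → ℂ) (t : ℝ) :
    Dq γ s0 (fun u => conj (f u)) t = conj (Dq γ s0 f t) := by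
  unfold Dq
  split_ifs
  · exact deriv.star
  · simp only [map_div₀, map_sub, Complex.conj_ofReal]

lemma ellBeta_conj (β βinv : ℝ → ℝ) (s0 : ℝ) (r : ℝ → ℝ) (y : ℝ → ℂ) (t : ℝ) :
    ellBeta β βinv s0 r (fun u => conj (y u)) t = conj (ellBeta β βinv s0 r y t) := by
  have hD : conj (DbinvC β βinv s0 t) = DbinvC β βinv s0 t := by
    simpa only [DbinvC, Complex.conj_ofReal] using (Dq_conj β s0 (fun u => (βinv u : ℂ)) t).symm
  simp only [ellBeta, funext (Dq_conj β s0 y), Dq_conj, map_add, map_mul, map_neg, hD,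
    Complex.conj_ofReal]

lemma mul_sub_mul_eq_zero_of_linear_combination {R : Type*} [CommRing R] [NoZeroDivisors R]
    {c₁ c₂ A B C D : R} (hc : c₁ ≠ 0 ∨ c₂ ≠ 0)
    (h₁ : c₁ * A + c₂ * B = 0) (h₂ : c₁ * C + c₂ * D = 0) : A * D - C * B = 0 := by
  rcases hc with hc | hc
  · have h : c₁ * (A * D - C * B) = 0 := by linear_combination D * h₁ - B * h₂
    exact (mul_eq_zero.mp h).resolve_left hc
  · have h : c₂ * (A * D - C * B) = 0 := by linear_combination A * h₂ - C * h₁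
    exact (mul_eq_zero.mp h).resolve_left hc

lemma wronk_conj_eq_zero_of_boundary {γ : ℝ → ℝ} {s0 t c₁ c₂ : ℝ} (hc : c₁ ≠ 0 ∨ c₂ ≠ 0)
    {y z : ℝ → ℂ} (hy : (c₁ : ℂ) * y t + (c₂ : ℂ) * Dq γ s0 y t = 0)
    (hz : (c₁ : ℂ) * z t + (c₂ : ℂ) * Dq γ s0 z t = 0) :
    wronk γ s0 y (fun u => conj (z u)) t = 0 := by
  have hz' := congrArg conj hz
  simp only [map_add, map_mul, Complex.conj_ofReal, map_zero, ← Dq_conj] at hz'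
  exact mul_sub_mul_eq_zero_of_linear_combination (by exact_mod_cast hc) hy hz'

lemma tsum_eq_zero_of_tendsto_sum_range {α : Type*} [AddCommMonoid α] [TopologicalSpace α]
    [T2Space α] {f : ℕ → α} (h : Tendsto (fun N => ∑ k ∈ Finset.range N, f k) atTop (𝓝 0)) :
    ∑' k, f k = 0 := by
  by_cases hf : Summable f
  · exact tendsto_nhds_unique hf.hasSum.tendsto_sum_nat h
  · exact tsum_eq_zero_of_not_summable hf

lemma conj_eq_of_tendsto_mul_sum_mul_conj {β : ℝ → ℝ} {x : ℝ} {y : ℝ → ℂ} {μ : ℂ}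
    (hpos : betaIntR β x (fun t => ‖y t‖ ^ 2) ≠ 0)
    (h : Tendsto (fun N => (μ - conj μ) * ∑ k ∈ Finset.range N,
      ((β^[k] x - β^[k + 1] x : ℝ) : ℂ) * (y (β^[k] x) * conj (y (β^[k] x)))) atTop (𝓝 0)) :
    conj μ = μ := by
  have hsum : Summable fun k => (β^[k] x - β^[k + 1] x) * ‖y (β^[k] x)‖ ^ 2 :=
    by_contra fun hs => hpos (tsum_eq_zero_of_not_summable hs)
  have hlim : Tendsto (fun N => (μ - conj μ) * ((∑ k ∈ Finset.range N,
      (β^[k] x - β^[k + 1] x) * ‖y (β^[k] x)‖ ^ 2 : ℝ) : ℂ)) atTop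
      (𝓝 ((μ - conj μ) * (betaIntR β x (fun t => ‖y t‖ ^ 2) : ℂ))) :=
    tendsto_const_nhds.mul ((Complex.continuous_ofReal.tendsto _).comp hsum.hasSum.tendsto_sum_nat)
  simp only [Complex.mul_conj', Complex.ofReal_sub] at h
  push_cast at hlim
  have h0 := tendsto_nhds_unique hlim h
  rw [mul_eq_zero, Complex.ofReal_eq_zero, or_iff_left hpos, sub_eq_zero] at h0
  exact h0.symm

structure IsSLEigenfunction (β βinv : ℝ → ℝ) (s0 b : ℝ) (r : ℝ → ℝ) (a₁ a₂ b₁ b₂ : ℝ)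
    (μ : ℂ) (y : ℝ → ℂ) : Prop where
  continuousAt : ContinuousAt y s0
  continuousAt_Dq : ContinuousAt (Dq β s0 y) s0
  ellBeta_iterate : ∀ k : ℕ, ellBeta β βinv s0 r y (β^[k] b) = μ * y (β^[k] b)
  boundary_left : (a₁ : ℂ) * y s0 + (a₂ : ℂ) * Dq βinv s0 y s0 = 0
  boundary_right : (b₁ : ℂ) * y b + (b₂ : ℂ) * Dq βinv s0 y b = 0

section Orbit

variable {I : Set ℝ} {β βinv : ℝ → ℝ} {s0 b : ℝ}

lemma apply_lt_self_of_lt (hsign : ∀ t ∈ I, (t - s0) * (β t - t) ≤ 0)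
    (hfix_uniq : ∀ t ∈ I, β t = t → t = s0) {t : ℝ} (ht : t ∈ I) (hst : s0 < t) : β t < t := by
  refine lt_of_le_of_ne ?_ fun h => hst.ne' (hfix_uniq t ht h)
  by_contra! h
  linarith [hsign t ht, mul_pos (sub_pos.2 hst) (sub_pos.2 h)]

lemma apply_ne_of_ne (hinv : InvOn βinv β I I) (hs0I : s0 ∈ I) (hfix : β s0 = s0) {t : ℝ}
    (ht : t ∈ I) (hts : t ≠ s0) : β t ≠ s0 :=
  fun h => hts (by rw [← hinv.1 ht, h, ← hfix, hinv.1 hs0I, hfix])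

lemma Dq_inv_apply (hinv : InvOn βinv β I I) (hs0I : s0 ∈ I) (hfix : β s0 = s0)
    (y : ℝ → ℂ) {t : ℝ} (ht : t ∈ I) (hts : t ≠ s0) :
    Dq βinv s0 y (β t) = Dq β s0 y t := by
  rw [Dq, Dq, if_neg (apply_ne_of_ne hinv hs0I hfix ht hts), if_neg hts, hinv.1 ht,
    ← neg_sub (y t), ← neg_sub (t : ℂ), neg_div_neg_eq]

lemma ellBeta_lagrange_identity (hinv : InvOn βinv β I I) (hs0I : s0 ∈ I) (hfix : β s0 = s0)
    (hfix_uniq : ∀ t ∈ I, β t = t → t = s0) (r : ℝ → ℝ) (y z : ℝ → ℂ) {t : ℝ} (ht : t ∈ I)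
    (hts : t ≠ s0) :
    ((t - β t : ℝ) : ℂ) * (z t * ellBeta β βinv s0 r y t - y t * ellBeta β βinv s0 r z t)
      = wronk βinv s0 y z t - wronk βinv s0 y z (β t) := by
  have hinv_ne_self : βinv t ≠ t := fun h => hts (hfix_uniq t ht (by rw [← h, hinv.2 ht, h]))
  have hinv_ne_fix : βinv t ≠ s0 := fun h => hts (by rw [← hinv.2 ht, h, hfix])
  have happ_ne_self : β t ≠ t := fun h => hts (hfix_uniq t ht h)
  have hinv_sub' : ((βinv t : ℝ) : ℂ) - t ≠ 0 := sub_ne_zero.2 (by exact_mod_cast hinv_ne_self)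
  have happ_sub' : ((β t : ℝ) : ℂ) - t ≠ 0 := sub_ne_zero.2 (by exact_mod_cast happ_ne_self)
  have hsub_inv' : (t : ℂ) - (βinv t : ℝ) ≠ 0 := sub_ne_zero.2 (by exact_mod_cast hinv_ne_self.symm)
  have hsub_app' : (t : ℂ) - (β t : ℝ) ≠ 0 := sub_ne_zero.2 (by exact_mod_cast happ_ne_self.symm)
  simp only [ellBeta, DbinvC, wronk, Dq, if_neg hts, if_neg hinv_ne_fix,
    if_neg (apply_ne_of_ne hinv hs0I hfix ht hts), hinv.1 ht, hinv.2 ht]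
  field_simp
  push_cast
  ring

lemma iterate_mem_Ioi (hmaps : MapsTo β I I) (hmono : StrictMonoOn β I) (hs0I : s0 ∈ I)
    (hfix : β s0 = s0) (hb : b ∈ I) (hsb : s0 < b) (k : ℕ) : β^[k] b ∈ I ∩ Ioi s0 := by
  induction k with
  | zero => exact ⟨hb, hsb⟩
  | succ k ih =>
    rw [iterate_succ_apply']
    exact ⟨hmaps ih.1, hfix ▸ hmono hs0I ih.1 ih.2⟩

lemma tendsto_iterate_fixedPoint (hIconn : I.OrdConnected) (hcont : ContinuousOn β I)
    (hmaps : MapsTo β I I) (hmono : StrictMonoOn β I) (hs0I : s0 ∈ I) (hfix : β s0 = s0)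
    (hsign : ∀ t ∈ I, (t - s0) * (β t - t) ≤ 0) (hfix_uniq : ∀ t ∈ I, β t = t → t = s0)
    (hb : b ∈ I) (hsb : s0 < b) : Tendsto (fun k => β^[k] b) atTop (𝓝 s0) := by
  have horbit := iterate_mem_Ioi hmaps hmono hs0I hfix hb hsb
  have hanti : Antitone fun k => β^[k] b := antitone_nat_of_succ_le fun k => by
    rw [iterate_succ_apply']
    exact (apply_lt_self_of_lt hsign hfix_uniq (horbit k).1 (horbit k).2).le
  have hbdd : BddBelow (range fun k => β^[k] b) :=
    ⟨s0, by rintro _ ⟨k, rfl⟩; exact (horbit k).2.le⟩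
  set L := ⨅ k, β^[k] b
  have hL : Tendsto (fun k => β^[k] b) atTop (𝓝 L) := tendsto_atTop_ciInf hanti hbdd
  have hLI : L ∈ I :=
    hIconn.out hs0I hb ⟨le_ciInf fun k => (horbit k).2.le, ciInf_le hbdd 0⟩
  have hβL : Tendsto (fun k => β (β^[k] b)) atTop (𝓝 (β L)) :=
    (hcont L hLI).tendsto.comp (tendsto_nhdsWithin_iff.2 ⟨hL, .of_forall fun k => (horbit k).1⟩)
  have hβL' : Tendsto (fun k => β (β^[k] b)) atTop (𝓝 L) := by
    simpa only [Function.comp_def, iterate_succ_apply'] using hL.comp (tendsto_add_atTop_nat 1)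
  rwa [← hfix_uniq L hLI (tendsto_nhds_unique hβL hβL')]

lemma tendsto_wronk_iterate (hinv : InvOn βinv β I I) (hs0I : s0 ∈ I) (hfix : β s0 = s0)
    (horbit : ∀ k, β^[k] b ∈ I ∩ Ioi s0) (hlim : Tendsto (fun k => β^[k] b) atTop (𝓝 s0))
    {y z : ℝ → ℂ} (hy : ContinuousAt y s0) (hz : ContinuousAt z s0)
    (hDy : ContinuousAt (Dq β s0 y) s0) (hDz : ContinuousAt (Dq β s0 z) s0) :
    Tendsto (fun k => wronk βinv s0 y z (β^[k] b)) atTop (𝓝 (wronk βinv s0 y z s0)) := by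
  have hDinv (f : ℝ → ℂ) : Dq βinv s0 f s0 = Dq β s0 f s0 := by simp only [Dq, if_pos]
  have hshift (f : ℝ → ℂ) (k : ℕ) : Dq βinv s0 f (β^[k + 1] b) = Dq β s0 f (β^[k] b) := by
    rw [iterate_succ_apply']
    exact Dq_inv_apply hinv hs0I hfix f (horbit k).1 (horbit k).2.ne'
  have hlim' := hlim.comp (tendsto_add_atTop_nat 1)
  rw [← tendsto_add_atTop_iff_nat 1]
  simp only [wronk, hshift, hDinv]
  exact ((hy.tendsto.comp hlim').mul (hDz.tendsto.comp hlim)).sub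
    ((hz.tendsto.comp hlim').mul (hDy.tendsto.comp hlim))

lemma tendsto_sum_range_lagrange_identity (hinv : InvOn βinv β I I) (hs0I : s0 ∈ I)
    (hfix : β s0 = s0) (hfix_uniq : ∀ t ∈ I, β t = t → t = s0) (horbit : ∀ k, β^[k] b ∈ I ∩ Ioi s0)
    (hlim : Tendsto (fun k => β^[k] b) atTop (𝓝 s0)) (r : ℝ → ℝ) {y z : ℝ → ℂ}
    (hy : ContinuousAt y s0) (hz : ContinuousAt z s0)
    (hDy : ContinuousAt (Dq β s0 y) s0) (hDz : ContinuousAt (Dq β s0 z) s0) :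
    Tendsto (fun N => ∑ k ∈ Finset.range N, ((β^[k] b - β^[k + 1] b : ℝ) : ℂ) *
        (z (β^[k] b) * ellBeta β βinv s0 r y (β^[k] b) -
          y (β^[k] b) * ellBeta β βinv s0 r z (β^[k] b)))
      atTop (𝓝 (wronk βinv s0 y z b - wronk βinv s0 y z s0)) := by
  have htelescope (N : ℕ) : ∑ k ∈ Finset.range N, ((β^[k] b - β^[k + 1] b : ℝ) : ℂ) *
        (z (β^[k] b) * ellBeta β βinv s0 r y (β^[k] b) -
          y (β^[k] b) * ellBeta β βinv s0 r z (β^[k] b))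
      = wronk βinv s0 y z b - wronk βinv s0 y z (β^[N] b) := by
    simp only [iterate_succ_apply', ellBeta_lagrange_identity hinv hs0I hfix hfix_uniq r y z
      (horbit _).1 (horbit _).2.ne']
    simpa only [iterate_succ_apply', iterate_zero, id_eq] using
      Finset.sum_range_sub' (fun k => wronk βinv s0 y z (β^[k] b)) N
  simp only [htelescope]
  exact tendsto_const_nhds.sub (tendsto_wronk_iterate hinv hs0I hfix horbit hlim hy hz hDy hDz)

lemma IsSLEigenfunction.tendsto_mul_sum_mul_conj (hinv : InvOn βinv β I I) (hs0I : s0 ∈ I)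
    (hfix : β s0 = s0) (hfix_uniq : ∀ t ∈ I, β t = t → t = s0)
    (horbit : ∀ k, β^[k] b ∈ I ∩ Ioi s0)
    (hlim : Tendsto (fun k => β^[k] b) atTop (𝓝 s0)) {r : ℝ → ℝ} {a₁ a₂ b₁ b₂ : ℝ}
    (ha : a₁ ≠ 0 ∨ a₂ ≠ 0) (hb : b₁ ≠ 0 ∨ b₂ ≠ 0) {y z : ℝ → ℂ} {μ ν : ℂ}
    (hy : IsSLEigenfunction β βinv s0 b r a₁ a₂ b₁ b₂ μ y)
    (hz : IsSLEigenfunction β βinv s0 b r a₁ a₂ b₁ b₂ ν z) :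
    Tendsto (fun N => (μ - conj ν) * ∑ k ∈ Finset.range N,
      ((β^[k] b - β^[k + 1] b : ℝ) : ℂ) * (y (β^[k] b) * conj (z (β^[k] b)))) atTop (𝓝 0) := by
  have hz' : ContinuousAt (fun u => conj (z u)) s0 :=
    Complex.continuous_conj.continuousAt.comp hz.continuousAt
  have hDz' : ContinuousAt (Dq β s0 fun u => conj (z u)) s0 := by
    rw [funext (Dq_conj β s0 z)]
    exact Complex.continuous_conj.continuousAt.comp hz.continuousAt_Dq
  have hgreen := tendsto_sum_range_lagrange_identity hinv hs0I hfix hfix_uniq horbit hlim r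
    hy.continuousAt hz' hy.continuousAt_Dq hDz'
  rw [wronk_conj_eq_zero_of_boundary hb hy.boundary_right hz.boundary_right,
    wronk_conj_eq_zero_of_boundary ha hy.boundary_left hz.boundary_left, sub_zero] at hgreen
  refine hgreen.congr fun N => ?_
  rw [Finset.mul_sum]
  refine Finset.sum_congr rfl fun k _ => ?_
  rw [ellBeta_conj, hy.ellBeta_iterate, hz.ellBeta_iterate, map_mul]
  ring

end Orbit

theorem stmt_9_general
    (I : Set ℝ) (hIconn : I.OrdConnected)
    (β βinv : ℝ → ℝ) (s0 : ℝ)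
    (hmono : StrictMonoOn β I) (hcont : ContinuousOn β I)
    (hbij : Set.BijOn β I I) (hinv : Set.InvOn βinv β I I)
    (hs0I : s0 ∈ I) (hfix : β s0 = s0)
    (hsign : ∀ t ∈ I, (t - s0) * (β t - t) ≤ 0)
    (huniq : ∀ t ∈ I, (t - s0) * (β t - t) = 0 → t = s0)
    (b : ℝ) (hb : b ∈ I) (hs0b : s0 ≤ b)
    (r : ℝ → ℝ)
    (a1 a2 b1 b2 : ℝ) (ha12 : |a1| + |a2| ≠ 0) (hb12 : |b1| + |b2| ≠ 0)
    (lam1 lam2 : ℂ) (hlam : lam1 ≠ lam2) (phi1 phi2 : ℝ → ℂ)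
    (hphi1c : ContinuousAt phi1 s0)
    (hDphi1d : DifferentiableAt ℝ (Dq β s0 phi1) s0)
    (hphi1eig : ∀ t ∈ insert s0 (Set.range fun j : ℕ => β^[j] b), ellBeta β βinv s0 r phi1 t = lam1 * phi1 t)
    (hphi1bc1 : (a1 : ℂ) * phi1 s0 + (a2 : ℂ) * Dq βinv s0 phi1 s0 = 0)
    (hphi1bc2 : (b1 : ℂ) * phi1 b + (b2 : ℂ) * Dq βinv s0 phi1 b = 0)
    (hphi2c : ContinuousAt phi2 s0)
    (hDphi2d : DifferentiableAt ℝ (Dq β s0 phi2) s0)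
    (hphi2eig : ∀ t ∈ insert s0 (Set.range fun j : ℕ => β^[j] b), ellBeta β βinv s0 r phi2 t = lam2 * phi2 t)
    (hphi2bc1 : (a1 : ℂ) * phi2 s0 + (a2 : ℂ) * Dq βinv s0 phi2 s0 = 0)
    (hphi2bc2 : (b1 : ℂ) * phi2 b + (b2 : ℂ) * Dq βinv s0 phi2 b = 0)
    (hphi2pos : 0 < betaIntR β b fun t => ‖phi2 t‖ ^ 2) :
    betaInt β b (fun t => phi1 t * conj (phi2 t)) = 0 := by
  rcases hs0b.eq_or_lt with rfl | hsb
  · simp [betaInt, iterate_fixed hfix]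
  have hfix_uniq (t : ℝ) (ht : t ∈ I) (h : β t = t) : t = s0 :=
    huniq t ht (by rw [h, sub_self, mul_zero])
  have ha : a1 ≠ 0 ∨ a2 ≠ 0 := not_and_or.1 fun h => ha12 (by simp [h.1, h.2])
  have hb' : b1 ≠ 0 ∨ b2 ≠ 0 := not_and_or.1 fun h => hb12 (by simp [h.1, h.2])
  have h1 : IsSLEigenfunction β βinv s0 b r a1 a2 b1 b2 lam1 phi1 :=
    ⟨hphi1c, hDphi1d.continuousAt, fun k => hphi1eig _ (mem_insert_of_mem _ ⟨k, rfl⟩),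
      hphi1bc1, hphi1bc2⟩
  have h2 : IsSLEigenfunction β βinv s0 b r a1 a2 b1 b2 lam2 phi2 :=
    ⟨hphi2c, hDphi2d.continuousAt, fun k => hphi2eig _ (mem_insert_of_mem _ ⟨k, rfl⟩),
      hphi2bc1, hphi2bc2⟩
  have horbit := iterate_mem_Ioi hbij.mapsTo hmono hs0I hfix hb hsb
  have hlim :=
    tendsto_iterate_fixedPoint hIconn hcont hbij.mapsTo hmono hs0I hfix hsign hfix_uniq hb hsb
  have hreal : conj lam2 = lam2 := conj_eq_of_tendsto_mul_sum_mul_conj hphi2pos.ne'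
    (h2.tendsto_mul_sum_mul_conj hinv hs0I hfix hfix_uniq horbit hlim ha hb' h2)
  have h12 := h1.tendsto_mul_sum_mul_conj hinv hs0I hfix hfix_uniq horbit hlim ha hb' h2
  rw [hreal] at h12
  refine tsum_eq_zero_of_tendsto_sum_range ?_
  simpa [sub_ne_zero.2 hlam] using h12.const_mul (lam1 - lam2)⁻¹

theorem stmt_9
    (I : Set ℝ) (hIconn : I.OrdConnected)
    (β βinv : ℝ → ℝ) (s0 : ℝ)
    (hmono : StrictMonoOn β I) (hcont : ContinuousOn β I)
    (hbij : Set.BijOn β I I) (hinv : Set.InvOn βinv β I I)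
    (hs0I : s0 ∈ I) (hfix : β s0 = s0)
    (hsign : ∀ t ∈ I, (t - s0) * (β t - t) ≤ 0)
    (huniq : ∀ t ∈ I, (t - s0) * (β t - t) = 0 → t = s0)
    (b : ℝ) (hb : b ∈ I) (hs0b : s0 ≤ b)
    (r : ℝ → ℝ) (hr : ContinuousOn r (Set.Icc s0 b))
    (a1 a2 b1 b2 : ℝ) (ha12 : |a1| + |a2| ≠ 0) (hb12 : |b1| + |b2| ≠ 0)
    (lam1 lam2 : ℂ) (hlam : lam1 ≠ lam2) (phi1 phi2 : ℝ → ℂ)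
    (hphi1L2 : Summable fun j : ℕ => (β^[j] b - β^[j + 1] b) * ‖phi1 (β^[j] b)‖ ^ 2)
    (hphi1c : ContinuousAt phi1 s0) (hphi1d : DifferentiableAt ℝ phi1 s0)
    (hDphi1d : DifferentiableAt ℝ (Dq β s0 phi1) s0)
    (hDphi1b : ∃ C, ∀ t ∈ insert s0 (Set.range fun j : ℕ => β^[j] b), ‖Dq β s0 phi1 t‖ ≤ C)
    (hDDphi1b : ∃ C, ∀ t ∈ insert s0 (Set.range fun j : ℕ => β^[j] b), ‖Dq βinv s0 (Dq β s0 phi1) t‖ ≤ C)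
    (hphi1eig : ∀ t ∈ insert s0 (Set.range fun j : ℕ => β^[j] b), ellBeta β βinv s0 r phi1 t = lam1 * phi1 t)
    (hphi1bc1 : (a1 : ℂ) * phi1 s0 + (a2 : ℂ) * Dq βinv s0 phi1 s0 = 0)
    (hphi1bc2 : (b1 : ℂ) * phi1 b + (b2 : ℂ) * Dq βinv s0 phi1 b = 0)
    (hphi1pos : 0 < betaIntR β b fun t => ‖phi1 t‖ ^ 2)
    (hphi2L2 : Summable fun j : ℕ => (β^[j] b - β^[j + 1] b) * ‖phi2 (β^[j] b)‖ ^ 2)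
    (hphi2c : ContinuousAt phi2 s0) (hphi2d : DifferentiableAt ℝ phi2 s0)
    (hDphi2d : DifferentiableAt ℝ (Dq β s0 phi2) s0)
    (hDphi2b : ∃ C, ∀ t ∈ insert s0 (Set.range fun j : ℕ => β^[j] b), ‖Dq β s0 phi2 t‖ ≤ C)
    (hDDphi2b : ∃ C, ∀ t ∈ insert s0 (Set.range fun j : ℕ => β^[j] b), ‖Dq βinv s0 (Dq β s0 phi2) t‖ ≤ C)
    (hphi2eig : ∀ t ∈ insert s0 (Set.range fun j : ℕ => β^[j] b), ellBeta β βinv s0 r phi2 t = lam2 * phi2 t)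
    (hphi2bc1 : (a1 : ℂ) * phi2 s0 + (a2 : ℂ) * Dq βinv s0 phi2 s0 = 0)
    (hphi2bc2 : (b1 : ℂ) * phi2 b + (b2 : ℂ) * Dq βinv s0 phi2 b = 0)
    (hphi2pos : 0 < betaIntR β b fun t => ‖phi2 t‖ ^ 2) :
    betaInt β b (fun t => phi1 t * conj (phi2 t)) = 0 :=
  stmt_9_general I hIconn β βinv s0 hmono hcont hbij hinv hs0I hfix hsign huniq b hb hs0b r a1 a2 b1
    b2 ha12 hb12 lam1 lam2 hlam phi1 phi2 hphi1c hDphi1d hphi1eig hphi1bc1 hphi1bc2 hphi2c hDphi2d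
    hphi2eig hphi2bc1 hphi2bc2 hphi2pos
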